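/- Let G ⊆ ℝⁿ be a bounded domain, (b^{jk}) a symmetric C³ matrix field on closure(G), T > 0, and let ψ ∈ C⁴(closure(G)) be positive and satisfy Condition (B)(i) with constant μ₀ > 0 together with: (1/4) Σ_{j,k} b^{jk}ψ_{x_j}ψ_{x_k} ≥ R₁² on closure(G), where R₁² := max_{closure(G)} ψ; c₁ < R₁/(√2 T); and μ₀ − 4c₁ − c₀ > 0, for some constants c₀, c₁ > 0. For λ > 0 define ℓ(t,x) = λ(ψ(x) − c₁t²), Ψ = ℓ_{tt} + Σ(b^{jk}ℓ_{x_j})_{x_k} − c₀λ, 𝒜 = ℓ_t² − ℓ_{tt} − Σ(b^{jk}ℓ_{x_j}ℓ_{x_k} − b^{jk}_{x_k}ℓ_{x_j} − b^{jk}ℓ_{x_jx_k}) − Ψ, and ℬ = 𝒜Ψ + ∂_t(𝒜ℓ_t) − Σ_{j,k} ∂_{x_k}(𝒜 b^{jk} ℓ_{x_j}) + (1/2)[∂_{tt}Ψ − Σ_{j,k} ∂_{x_k}(b^{jk} Ψ_{x_j})]. Then there exist constants C > 0 and λ₁ > 0 such that for all λ ≥ λ₁, t ∈ [0,T], and x ∈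 closure(G): ℬ(t,x) ≥ Cλ³. -/

import Mathlib

open scoped BigOperators

/-- The partial derivative `∂f/∂x_j` at `x`. -/
noncomputable def partialDeriv8 {n : ℕ} (f : EuclideanSpace ℝ (Fin n) → ℝ) (j : Fin n)
    (x : EuclideanSpace ℝ (Fin n)) : ℝ :=
  fderiv ℝ f x (EuclideanSpace.single j 1)

/-- The Carleman weight exponent `ℓ(t,x) = λ(ψ(x) − c₁ t²)`. -/
noncomputable def ell8 {n : ℕ} (lam c₁ : ℝ) (ψ : EuclideanSpace ℝ (Fin n) → ℝ)
    (t : ℝ) (x : EuclideanSpace ℝ (Fin n)) : ℝ :=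
  lam * (ψ x - c₁ * t ^ 2)

/-- `ℓ_t(t,x)`. -/
noncomputable def ellt8 {n : ℕ} (lam c₁ : ℝ) (ψ : EuclideanSpace ℝ (Fin n) → ℝ)
    (t : ℝ) (x : EuclideanSpace ℝ (Fin n)) : ℝ :=
  deriv (fun s => ell8 lam c₁ ψ s x) t

/-- `ℓ_{tt}(t,x)`. -/
noncomputable def elltt8 {n : ℕ} (lam c₁ : ℝ) (ψ : EuclideanSpace ℝ (Fin n) → ℝ)
    (t : ℝ) (x : EuclideanSpace ℝ (Fin n)) : ℝ :=
  deriv (fun s => ellt8 lam c₁ ψ s x) t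

/-- `Ψ = ℓ_{tt} + Σ_{j,k} (b^{jk} ℓ_{x_j})_{x_k} − c₀ λ`. -/
noncomputable def Psi8 {n : ℕ} (b : EuclideanSpace ℝ (Fin n) → Fin n → Fin n → ℝ)
    (ψ : EuclideanSpace ℝ (Fin n) → ℝ) (lam c₀ c₁ : ℝ)
    (t : ℝ) (x : EuclideanSpace ℝ (Fin n)) : ℝ :=
  elltt8 lam c₁ ψ t x
    + ∑ j, ∑ k, partialDeriv8 (fun y => b y j k * partialDeriv8 (ell8 lam c₁ ψ t) j y) k x
    - c₀ * lam

/-- `𝒜 = ℓ_t² − ℓ_{tt} − Σ_{j,k}(b^{jk}ℓ_{x_j}ℓ_{x_k} − b^{jk}_{x_k}ℓ_{x_j}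
  − b^{jk}ℓ_{x_j x_k}) − Ψ`. -/
noncomputable def AA8 {n : ℕ} (b : EuclideanSpace ℝ (Fin n) → Fin n → Fin n → ℝ)
    (ψ : EuclideanSpace ℝ (Fin n) → ℝ) (lam c₀ c₁ : ℝ)
    (t : ℝ) (x : EuclideanSpace ℝ (Fin n)) : ℝ :=
  (ellt8 lam c₁ ψ t x) ^ 2 - elltt8 lam c₁ ψ t x
    - (∑ j, ∑ k,
        (b x j k * partialDeriv8 (ell8 lam c₁ ψ t) j x * partialDeriv8 (ell8 lam c₁ ψ t) k x
          - partialDeriv8 (fun y => b y j k) k x * partialDeriv8 (ell8 lam c₁ ψ t) j x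
          - b x j k * partialDeriv8 (fun y => partialDeriv8 (ell8 lam c₁ ψ t) j y) k x))
    - Psi8 b ψ lam c₀ c₁ t x

/-- `ℬ = 𝒜Ψ + ∂_t(𝒜ℓ_t) − Σ_{j,k}∂_{x_k}(𝒜 b^{jk} ℓ_{x_j})
  + (1/2)[∂_{tt}Ψ − Σ_{j,k}∂_{x_k}(b^{jk}Ψ_{x_j})]`. -/
noncomputable def BB8 {n : ℕ} (b : EuclideanSpace ℝ (Fin n) → Fin n → Fin n → ℝ)
    (ψ : EuclideanSpace ℝ (Fin n) → ℝ) (lam c₀ c₁ : ℝ)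
    (t : ℝ) (x : EuclideanSpace ℝ (Fin n)) : ℝ :=
  AA8 b ψ lam c₀ c₁ t x * Psi8 b ψ lam c₀ c₁ t x
    + deriv (fun s => AA8 b ψ lam c₀ c₁ s x * ellt8 lam c₁ ψ s x) t
    - (∑ j, ∑ k, partialDeriv8
        (fun y => AA8 b ψ lam c₀ c₁ t y * b y j k * partialDeriv8 (ell8 lam c₁ ψ t) j y) k x)
    + (1/2) * (deriv (fun s => deriv (fun τ => Psi8 b ψ lam c₀ c₁ τ x) s) t
        - ∑ j, ∑ k, partialDeriv8
            (fun y => b y j k * partialDeriv8 (fun y' => Psi8 b ψ lam c₀ c₁ t y') j y) k x)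

/-- Condition (B)(i): the pseudoconvexity inequality with constant `μ₀` on the set `S`. -/
def CondBi8 {n : ℕ} (b : EuclideanSpace ℝ (Fin n) → Fin n → Fin n → ℝ)
    (ψ : EuclideanSpace ℝ (Fin n) → ℝ) (μ₀ : ℝ) (S : Set (EuclideanSpace ℝ (Fin n))) : Prop :=
  ∀ x ∈ S, ∀ ξ : Fin n → ℝ,
    μ₀ * ∑ j, ∑ k, b x j k * ξ j * ξ k ≤
      ∑ j, ∑ k, (∑ j', ∑ k',
        (2 * b x j k' * partialDeriv8 (fun y => b y j' k * partialDeriv8 ψ j' y) k' x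
          - partialDeriv8 (fun y => b y j k) k' x * b x j' k' * partialDeriv8 ψ j' x))
        * ξ j * ξ k

/-!
Since `ℓ` is affine in `ψ` and quadratic in `t`, every quantity in `ℬ` is an explicit polynomial
in `λ` whose coefficients are built from `b`, `ψ` and their derivatives. Writing
`Q = Σ b^{jk} ψ_{x_j} ψ_{x_k}`, one finds `𝒜 = λ²(4c₁²t² − Q) + λ(4c₁ + c₀)` and
`ℬ = λ³[(4c₁ + c₀)Q + Σ b^{jk} ψ_{x_j} Q_{x_k} − 4(8c₁³ + c₀c₁²)t²] + O(λ²)`.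
By the symmetry of `b`, the middle term is the quadratic form of Condition (B)(i) at `ξ = ∇ψ`,
hence at least `μ₀ Q`. With `Q ≥ 4R₁²` and `2c₁²T² < R₁²` the `λ³`-coefficient is at least
`2R₁²(2μ₀ + c₀) > 0`, and the lower-order terms are bounded on the compact set `closure G`.
-/

section

variable {n : ℕ}

section PartialDeriv

variable {f g : EuclideanSpace ℝ (Fin n) → ℝ} {j : Fin n} {x : EuclideanSpace ℝ (Fin n)}

theorem partialDeriv8_const_mul (hf : DifferentiableAt ℝ f x) (c : ℝ) :
    partialDeriv8 (fun y => c * f y) j x = c * partialDeriv8 f j x := by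
  simp [partialDeriv8, fderiv_const_mul hf]

theorem partialDeriv8_mul (hf : DifferentiableAt ℝ f x) (hg : DifferentiableAt ℝ g x) :
    partialDeriv8 (fun y => f y * g y) j x
      = partialDeriv8 f j x * g x + f x * partialDeriv8 g j x := by
  simp only [partialDeriv8, fderiv_fun_mul hf hg, add_apply, smul_apply, smul_eq_mul]
  ring

theorem partialDeriv8_sub_const (c : ℝ) :
    partialDeriv8 (fun y => f y - c) j x = partialDeriv8 f j x := by
  simp [partialDeriv8, fderiv_sub_const]

theorem partialDeriv8_sum {ι : Type*} (s : Finset ι) {F : ι → EuclideanSpace ℝ (Fin n) → ℝ}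
    (hF : ∀ i ∈ s, DifferentiableAt ℝ (F i) x) :
    partialDeriv8 (fun y => ∑ i ∈ s, F i y) j x = ∑ i ∈ s, partialDeriv8 (F i) j x := by
  simp [partialDeriv8, fderiv_fun_sum hF]

theorem ContDiff.partialDeriv8 {m k : WithTop ℕ∞} (hf : ContDiff ℝ m f) (hk : k + 1 ≤ m) :
    ContDiff ℝ k (partialDeriv8 f j) :=
  (hf.fderiv_right hk).clm_apply contDiff_const

end PartialDeriv

section Weight

variable {lam c₁ t : ℝ} {ψ : EuclideanSpace ℝ (Fin n) → ℝ} {j : Fin n}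
  {x : EuclideanSpace ℝ (Fin n)}

theorem ellt8_eq : ellt8 lam c₁ ψ t x = -2 * lam * c₁ * t := by
  unfold ellt8 ell8
  rw [((((hasDerivAt_pow 2 t).const_mul c₁).const_sub (ψ x)).const_mul lam).deriv]
  push_cast
  ring

theorem elltt8_eq : elltt8 lam c₁ ψ t x = -2 * lam * c₁ := by
  simp [elltt8, ellt8_eq]

theorem partialDeriv8_ell8 (hψ : DifferentiableAt ℝ ψ x) :
    partialDeriv8 (ell8 lam c₁ ψ t) j x = lam * partialDeriv8 ψ j x :=
  (partialDeriv8_const_mul (hψ.sub_const _) lam).trans (by rw [partialDeriv8_sub_const])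

theorem contDiff_ell8 {m : WithTop ℕ∞} (hψ : ContDiff ℝ m ψ) : ContDiff ℝ m (ell8 lam c₁ ψ t) :=
  contDiff_const.mul (hψ.sub contDiff_const)

end Weight

noncomputable def bGradPair (b : EuclideanSpace ℝ (Fin n) → Fin n → Fin n → ℝ)
    (f g : EuclideanSpace ℝ (Fin n) → ℝ) (x : EuclideanSpace ℝ (Fin n)) : ℝ :=
  ∑ j, ∑ k, b x j k * partialDeriv8 f j x * partialDeriv8 g k x

noncomputable def divBGrad (b : EuclideanSpace ℝ (Fin n) → Fin n → Fin n → ℝ)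
    (f : EuclideanSpace ℝ (Fin n) → ℝ) (x : EuclideanSpace ℝ (Fin n)) : ℝ :=
  ∑ j, ∑ k, partialDeriv8 (fun y => b y j k * partialDeriv8 f j y) k x

section Smoothness

variable {b : EuclideanSpace ℝ (Fin n) → Fin n → Fin n → ℝ} {f g : EuclideanSpace ℝ (Fin n) → ℝ}
  {m : WithTop ℕ∞}

theorem contDiff_bGradPair (hb : ∀ j k, ContDiff ℝ m fun y => b y j k)
    (hf : ContDiff ℝ (m + 1) f) (hg : ContDiff ℝ (m + 1) g) : ContDiff ℝ m (bGradPair b f g) :=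
  ContDiff.sum fun j _ => ContDiff.sum fun k _ =>
    ((hb j k).mul (hf.partialDeriv8 le_rfl)).mul (hg.partialDeriv8 le_rfl)

theorem contDiff_divBGrad (hb : ∀ j k, ContDiff ℝ (m + 1) fun y => b y j k)
    (hf : ContDiff ℝ (m + 2) f) : ContDiff ℝ m (divBGrad b f) := by
  have hf' : ContDiff ℝ (m + 1 + 1) f := by rwa [add_assoc, one_add_one_eq_two]
  exact ContDiff.sum fun j _ => ContDiff.sum fun k _ =>
    ((hb j k).mul (hf'.partialDeriv8 le_rfl)).partialDeriv8 le_rfl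

end Smoothness

section Formulas

variable {b : EuclideanSpace ℝ (Fin n) → Fin n → Fin n → ℝ} {ψ : EuclideanSpace ℝ (Fin n) → ℝ}
  {lam c₀ c₁ t : ℝ} {x : EuclideanSpace ℝ (Fin n)}

theorem partialDeriv8_b_mul_partialDeriv8_ell8 (hb : ∀ j k, ContDiff ℝ 1 fun y => b y j k)
    (hψ : ContDiff ℝ 2 ψ) (j k : Fin n) :
    partialDeriv8 (fun y => b y j k * partialDeriv8 (ell8 lam c₁ ψ t) j y) k x
      = lam * partialDeriv8 (fun y => b y j k * partialDeriv8 ψ j y) k x := by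
  simp_rw [partialDeriv8_ell8 (hψ.differentiable two_ne_zero _), mul_left_comm _ lam]
  exact partialDeriv8_const_mul
    (((hb j k).mul (hψ.partialDeriv8 le_rfl)).differentiable one_ne_zero _) lam

theorem Psi8_eq (hb : ∀ j k, ContDiff ℝ 1 fun y => b y j k) (hψ : ContDiff ℝ 2 ψ) :
    Psi8 b ψ lam c₀ c₁ t x = lam * divBGrad b ψ x - lam * (2 * c₁ + c₀) := by
  simp only [Psi8, elltt8_eq, partialDeriv8_b_mul_partialDeriv8_ell8 hb hψ, ← Finset.mul_sum,
    divBGrad]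
  ring

theorem AA8_eq (hb : ∀ j k, ContDiff ℝ 1 fun y => b y j k) (hψ : ContDiff ℝ 2 ψ) :
    AA8 b ψ lam c₀ c₁ t x
      = lam ^ 2 * (4 * c₁ ^ 2 * t ^ 2 - bGradPair b ψ ψ x) + lam * (4 * c₁ + c₀) := by
  have hψ' : Differentiable ℝ ψ := hψ.differentiable two_ne_zero
  have hψj : ∀ j, Differentiable ℝ (partialDeriv8 ψ j) :=
    fun j => (hψ.partialDeriv8 (k := 1) le_rfl).differentiable one_ne_zero
  have hterm : ∀ j k,
      b x j k * partialDeriv8 (ell8 lam c₁ ψ t) j x * partialDeriv8 (ell8 lam c₁ ψ t) k x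
        - partialDeriv8 (fun y => b y j k) k x * partialDeriv8 (ell8 lam c₁ ψ t) j x
        - b x j k * partialDeriv8 (fun y => partialDeriv8 (ell8 lam c₁ ψ t) j y) k x
      = lam ^ 2 * (b x j k * partialDeriv8 ψ j x * partialDeriv8 ψ k x)
        - lam * partialDeriv8 (fun y => b y j k * partialDeriv8 ψ j y) k x := fun j k => by
    simp_rw [partialDeriv8_ell8 (hψ' _)]
    rw [partialDeriv8_const_mul (hψj j x),
      partialDeriv8_mul ((hb j k).differentiable one_ne_zero x) (hψj j x)]
    ring
  simp only [AA8, Psi8_eq hb hψ, ellt8_eq, elltt8_eq, hterm, Finset.sum_sub_distrib,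
    ← Finset.mul_sum, bGradPair, divBGrad]
  ring

theorem deriv_AA8_mul_ellt8 (hb : ∀ j k, ContDiff ℝ 1 fun y => b y j k) (hψ : ContDiff ℝ 2 ψ) :
    deriv (fun s => AA8 b ψ lam c₀ c₁ s x * ellt8 lam c₁ ψ s x) t
      = lam ^ 3 * (2 * c₁ * bGradPair b ψ ψ x - 24 * c₁ ^ 3 * t ^ 2)
        - 2 * lam ^ 2 * c₁ * (4 * c₁ + c₀) := by
  have hA := ((((hasDerivAt_pow 2 t).const_mul (4 * c₁ ^ 2)).sub_const
    (bGradPair b ψ ψ x)).const_mul (lam ^ 2)).add_const (lam * (4 * c₁ + c₀))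
  have hℓ := (hasDerivAt_id' (x := t)).const_mul (-2 * lam * c₁)
  simp only [AA8_eq hb hψ, ellt8_eq]
  rw [(hA.fun_mul hℓ).deriv]
  push_cast
  ring

theorem AA8_eq_fun (hb : ∀ j k, ContDiff ℝ 1 fun y => b y j k) (hψ : ContDiff ℝ 2 ψ) :
    AA8 b ψ lam c₀ c₁ t = fun y => -lam ^ 2 * bGradPair b ψ ψ y
      - (-lam ^ 2 * (4 * c₁ ^ 2 * t ^ 2) - lam * (4 * c₁ + c₀)) := by
  funext y
  rw [AA8_eq hb hψ]
  ring

theorem contDiff_AA8 (hb : ∀ j k, ContDiff ℝ 1 fun y => b y j k) (hψ : ContDiff ℝ 2 ψ) :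
    ContDiff ℝ 1 (AA8 b ψ lam c₀ c₁ t) := by
  rw [AA8_eq_fun hb hψ]
  exact (contDiff_const.mul (contDiff_bGradPair hb hψ hψ)).sub contDiff_const

theorem partialDeriv8_AA8 (hb : ∀ j k, ContDiff ℝ 1 fun y => b y j k) (hψ : ContDiff ℝ 2 ψ)
    (k : Fin n) :
    partialDeriv8 (AA8 b ψ lam c₀ c₁ t) k x = -lam ^ 2 * partialDeriv8 (bGradPair b ψ ψ) k x := by
  rw [AA8_eq_fun hb hψ, partialDeriv8_sub_const, partialDeriv8_const_mul]
  exact (contDiff_bGradPair hb hψ hψ).differentiable one_ne_zero x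

theorem sum_partialDeriv8_AA8_mul (hb : ∀ j k, ContDiff ℝ 1 fun y => b y j k)
    (hψ : ContDiff ℝ 2 ψ) :
    ∑ j, ∑ k, partialDeriv8
        (fun y => AA8 b ψ lam c₀ c₁ t y * b y j k * partialDeriv8 (ell8 lam c₁ ψ t) j y) k x
      = -lam ^ 3 * bGradPair b ψ (bGradPair b ψ ψ) x
        + AA8 b ψ lam c₀ c₁ t x * (lam * divBGrad b ψ x) := by
  have hterm : ∀ j k, partialDeriv8
      (fun y => AA8 b ψ lam c₀ c₁ t y * b y j k * partialDeriv8 (ell8 lam c₁ ψ t) j y) k x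
      = -lam ^ 3 * (b x j k * partialDeriv8 ψ j x * partialDeriv8 (bGradPair b ψ ψ) k x)
        + AA8 b ψ lam c₀ c₁ t x
          * (lam * partialDeriv8 (fun y => b y j k * partialDeriv8 ψ j y) k x) := fun j k => by
    simp_rw [mul_assoc (AA8 b ψ lam c₀ c₁ t _)]
    rw [partialDeriv8_mul ((contDiff_AA8 hb hψ).differentiable one_ne_zero x)
        (((hb j k).mul ((contDiff_ell8 hψ).partialDeriv8 le_rfl)).differentiable one_ne_zero x),
      partialDeriv8_AA8 hb hψ, partialDeriv8_b_mul_partialDeriv8_ell8 hb hψ,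
      partialDeriv8_ell8 (hψ.differentiable two_ne_zero x)]
    ring
  simp only [hterm, Finset.sum_add_distrib, ← Finset.mul_sum, bGradPair, divBGrad]

theorem sum_partialDeriv8_b_mul_partialDeriv8_Psi8 (hb : ∀ j k, ContDiff ℝ 3 fun y => b y j k)
    (hψ : ContDiff ℝ 4 ψ) :
    ∑ j, ∑ k, partialDeriv8
        (fun y => b y j k * partialDeriv8 (fun y' => Psi8 b ψ lam c₀ c₁ t y') j y) k x
      = lam * divBGrad b (divBGrad b ψ) x := by
  have hb₁ : ∀ j k, ContDiff ℝ 1 fun y => b y j k := fun j k => (hb j k).of_le (by norm_num)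
  have hL : ContDiff ℝ 2 (divBGrad b ψ) := contDiff_divBGrad hb hψ
  have hΨ : Psi8 b ψ lam c₀ c₁ t = fun y => lam * divBGrad b ψ y - lam * (2 * c₁ + c₀) :=
    funext fun y => Psi8_eq hb₁ (hψ.of_le (by norm_num))
  have hterm : ∀ j k, partialDeriv8
      (fun y => b y j k * partialDeriv8 (fun y' => Psi8 b ψ lam c₀ c₁ t y') j y) k x
      = lam * partialDeriv8 (fun y => b y j k * partialDeriv8 (divBGrad b ψ) j y) k x :=
      fun j k => by
    simp_rw [hΨ, partialDeriv8_sub_const, partialDeriv8_const_mul (hL.differentiable two_ne_zero _),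
      mul_left_comm _ lam]
    exact partialDeriv8_const_mul
      (((hb₁ j k).mul (hL.partialDeriv8 le_rfl)).differentiable one_ne_zero _) lam
  simp only [hterm, ← Finset.mul_sum, divBGrad]

theorem BB8_eq (hb : ∀ j k, ContDiff ℝ 3 fun y => b y j k) (hψ : ContDiff ℝ 4 ψ) :
    BB8 b ψ lam c₀ c₁ t x
      = lam ^ 3 * ((4 * c₁ + c₀) * bGradPair b ψ ψ x + bGradPair b ψ (bGradPair b ψ ψ) x
          - 4 * (8 * c₁ ^ 3 + c₀ * c₁ ^ 2) * t ^ 2)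
        - lam ^ 2 * (4 * c₁ + c₀) ^ 2 - lam / 2 * divBGrad b (divBGrad b ψ) x := by
  have hb₁ : ∀ j k, ContDiff ℝ 1 fun y => b y j k := fun j k => (hb j k).of_le (by norm_num)
  have hψ₂ : ContDiff ℝ 2 ψ := hψ.of_le (by norm_num)
  have hΨt : deriv (fun s => deriv (fun τ => Psi8 b ψ lam c₀ c₁ τ x) s) t = 0 := by
    simp [Psi8_eq hb₁ hψ₂]
  rw [BB8, hΨt, deriv_AA8_mul_ellt8 hb₁ hψ₂, sum_partialDeriv8_AA8_mul hb₁ hψ₂,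
    sum_partialDeriv8_b_mul_partialDeriv8_Psi8 hb hψ, Psi8_eq hb₁ hψ₂, AA8_eq hb₁ hψ₂]
  ring

end Formulas

section FourfoldSums

variable {ι M : Type*} [Fintype ι] [AddCommMonoid M]

theorem sum4_eq_sum_prod (f : ι → ι → ι → ι → M) :
    ∑ a, ∑ b, ∑ c, ∑ d, f a b c d = ∑ p : ι × ι × ι × ι, f p.1 p.2.1 p.2.2.1 p.2.2.2 := by
  simp only [Fintype.sum_prod_type]

theorem sum4_swap_two_four (f : ι → ι → ι → ι → M) :
    ∑ a, ∑ b, ∑ c, ∑ d, f a b c d = ∑ a, ∑ b, ∑ c, ∑ d, f a d c b := by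
  simp only [sum4_eq_sum_prod]
  exact Fintype.sum_bijective (fun p => (p.1, p.2.2.2, p.2.2.1, p.2.1))
    (Function.Involutive.bijective fun _ => rfl) _ _ fun _ => rfl

theorem sum4_swap_three_four (f : ι → ι → ι → ι → M) :
    ∑ a, ∑ b, ∑ c, ∑ d, f a b c d = ∑ a, ∑ b, ∑ c, ∑ d, f a b d c :=
  Finset.sum_congr rfl fun _ _ => Finset.sum_congr rfl fun _ _ => Finset.sum_comm

theorem sum4_swap_pairs (f : ι → ι → ι → ι → M) :
    ∑ a, ∑ b, ∑ c, ∑ d, f a b c d = ∑ a, ∑ b, ∑ c, ∑ d, f c d a b := by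
  simp only [sum4_eq_sum_prod]
  exact Fintype.sum_bijective (fun p => (p.2.2.1, p.2.2.2, p.1, p.2.1))
    (Function.Involutive.bijective fun _ => rfl) _ _ fun _ => rfl

end FourfoldSums

/-- The identity behind `bGradPair_bGradPair_self_eq`, with `B = b(x)`, `β j k m = ∂_m b^{jk}(x)`,
`H a m = ∂_m ψ_{x_a}(x)` and `ξ = ∇ψ(x)`. -/
theorem sum_quartic_identity {ι : Type*} [Fintype ι] (B H : ι → ι → ℝ) (β : ι → ι → ι → ℝ)
    (ξ : ι → ℝ) (hB : ∀ j k, B j k = B k j) :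
    ∑ j, ∑ k, B j k * ξ j * ∑ j', ∑ k',
        (β j' k' k * ξ j' * ξ k' + B j' k' * H j' k * ξ k' + B j' k' * ξ j' * H k' k)
      = ∑ j, ∑ k, (∑ j', ∑ k',
          (2 * B j k' * (β j' k k' * ξ j' + B j' k * H j' k') - β j k k' * B j' k' * ξ j'))
          * ξ j * ξ k := by
  simp only [Finset.mul_sum, Finset.sum_mul, mul_add, add_mul, sub_mul, Finset.sum_add_distrib,
    Finset.sum_sub_distrib]
  rw [sum4_swap_two_four (fun j k j' k' => 2 * B j k' * (β j' k k' * ξ j') * ξ j * ξ k),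
    sum4_swap_two_four (fun j k j' k' => 2 * B j k' * (B j' k * H j' k') * ξ j * ξ k),
    sum4_swap_pairs (fun j k j' k' => β j k k' * B j' k' * ξ j' * ξ j * ξ k),
    sum4_swap_three_four (fun j k j' k' => B j k * ξ j * (B j' k' * ξ j' * H k' k))]
  simp only [← Finset.sum_add_distrib, ← Finset.sum_sub_distrib]
  refine Finset.sum_congr rfl fun j _ => Finset.sum_congr rfl fun k _ =>
    Finset.sum_congr rfl fun j' _ => Finset.sum_congr rfl fun k' _ => ?_
  rw [hB k' j']
  ring

section Pseudoconvexity

variable {b : EuclideanSpace ℝ (Fin n) → Fin n → Fin n → ℝ} {ψ : EuclideanSpace ℝ (Fin n) → ℝ}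
  {x : EuclideanSpace ℝ (Fin n)}

theorem partialDeriv8_bGradPair {f g : EuclideanSpace ℝ (Fin n) → ℝ}
    (hb : ∀ j k, DifferentiableAt ℝ (fun y => b y j k) x)
    (hf : ∀ j, DifferentiableAt ℝ (partialDeriv8 f j) x)
    (hg : ∀ j, DifferentiableAt ℝ (partialDeriv8 g j) x) (k : Fin n) :
    partialDeriv8 (bGradPair b f g) k x = ∑ j, ∑ j',
      (partialDeriv8 (fun y => b y j j') k x * partialDeriv8 f j x * partialDeriv8 g j' x
        + b x j j' * partialDeriv8 (partialDeriv8 f j) k x * partialDeriv8 g j' x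
        + b x j j' * partialDeriv8 f j x * partialDeriv8 (partialDeriv8 g j') k x) := by
  have hterm : ∀ j j', DifferentiableAt ℝ
      (fun y => b y j j' * partialDeriv8 f j y * partialDeriv8 g j' y) x :=
    fun j j' => ((hb j j').fun_mul (hf j)).fun_mul (hg j')
  unfold bGradPair
  rw [partialDeriv8_sum _ fun j _ => DifferentiableAt.fun_sum fun j' _ => hterm j j']
  refine Finset.sum_congr rfl fun j _ => ?_
  rw [partialDeriv8_sum _ fun j' _ => hterm j j']
  refine Finset.sum_congr rfl fun j' _ => ?_
  rw [partialDeriv8_mul ((hb j j').fun_mul (hf j)) (hg j'), partialDeriv8_mul (hb j j') (hf j)]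
  ring

theorem bGradPair_bGradPair_self_eq (hb : ∀ j k, ContDiff ℝ 1 fun y => b y j k)
    (hψ : ContDiff ℝ 2 ψ) (hsymm : ∀ x j k, b x j k = b x k j) (x : EuclideanSpace ℝ (Fin n)) :
    bGradPair b ψ (bGradPair b ψ ψ) x = ∑ j, ∑ k, (∑ j', ∑ k',
        (2 * b x j k' * partialDeriv8 (fun y => b y j' k * partialDeriv8 ψ j' y) k' x
          - partialDeriv8 (fun y => b y j k) k' x * b x j' k' * partialDeriv8 ψ j' x))
        * partialDeriv8 ψ j x * partialDeriv8 ψ k x := by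
  have hbd : ∀ j k, DifferentiableAt ℝ (fun y => b y j k) x :=
    fun j k => (hb j k).differentiable one_ne_zero x
  have hψd : ∀ j, DifferentiableAt ℝ (partialDeriv8 ψ j) x :=
    fun j => (hψ.partialDeriv8 le_rfl).differentiable one_ne_zero x
  simp only [bGradPair, partialDeriv8_bGradPair hbd hψd hψd, partialDeriv8_mul (hbd _ _) (hψd _)]
  exact sum_quartic_identity _ _ _ _ (hsymm x)

theorem CondBi8.mul_bGradPair_le {μ₀ : ℝ} {S : Set (EuclideanSpace ℝ (Fin n))}
    (hB : CondBi8 b ψ μ₀ S) (hb : ∀ j k, ContDiff ℝ 1 fun y => b y j k)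
    (hψ : ContDiff ℝ 2 ψ) (hsymm : ∀ x j k, b x j k = b x k j) (hx : x ∈ S) :
    μ₀ * bGradPair b ψ ψ x ≤ bGradPair b ψ (bGradPair b ψ ψ) x := by
  rw [bGradPair_bGradPair_self_eq hb hψ hsymm]
  exact hB x hx _

end Pseudoconvexity

theorem exists_forall_cubic_le {κ K : ℝ} (hκ : 0 < κ) :
    ∃ lam₁ > 0, ∀ lam, lam₁ ≤ lam → ∀ a p q : ℝ, κ ≤ a → p ≤ K → q ≤ K →
      κ / 2 * lam ^ 3 ≤ lam ^ 3 * a - lam ^ 2 * p - lam * q := by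
  refine ⟨max 1 (4 * max K 0 / κ), by positivity, fun lam hlam a p q ha hp hq => ?_⟩
  have hlam1 : 1 ≤ lam := le_of_max_le_left hlam
  have hlamK : 4 * max K 0 ≤ lam * κ := (div_le_iff₀ hκ).mp (le_of_max_le_right hlam)
  have hK : 0 ≤ max K 0 := le_max_right _ _
  have hp' : lam ^ 2 * p ≤ lam ^ 2 * max K 0 :=
    mul_le_mul_of_nonneg_left (hp.trans (le_max_left _ _)) (by positivity)
  have hq' : lam * q ≤ lam ^ 2 * max K 0 := calc
    lam * q ≤ lam * max K 0 := mul_le_mul_of_nonneg_left (hq.trans (le_max_left _ _)) (by positivity)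
    _ ≤ lam ^ 2 * max K 0 := mul_le_mul_of_nonneg_right (by nlinarith) hK
  have ha' : lam ^ 3 * κ ≤ lam ^ 3 * a := mul_le_mul_of_nonneg_left ha (by positivity)
  have hK' : 2 * (lam ^ 2 * max K 0) ≤ κ / 2 * lam ^ 3 := by nlinarith
  linarith

theorem le_leadingCoeff {μ₀ c₀ c₁ M Q E t T : ℝ} (hμ₀ : 0 < μ₀) (hc₀ : 0 < c₀) (hc₁ : 0 < c₁)
    (hQ : 4 * M ≤ Q) (hE : μ₀ * Q ≤ E) (ht : t ^ 2 ≤ T ^ 2) (hM : 2 * c₁ ^ 2 * T ^ 2 ≤ M) :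
    2 * M * (2 * μ₀ + c₀) ≤ (4 * c₁ + c₀) * Q + E - 4 * (8 * c₁ ^ 3 + c₀ * c₁ ^ 2) * t ^ 2 := by
  nlinarith [mul_le_mul_of_nonneg_left ht (by positivity : 0 ≤ 4 * c₁ ^ 2 * (8 * c₁ + c₀))]

theorem two_mul_sq_mul_sq_lt_of_lt_sqrt_div {c T M : ℝ} (hc : 0 ≤ c) (hT : 0 < T)
    (h : c < √M / (√2 * T)) : 2 * c ^ 2 * T ^ 2 < M := by
  have h' : c * (√2 * T) < √M := (lt_div_iff₀ (by positivity)).mp h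
  rw [Real.lt_sqrt (by positivity), mul_pow, mul_pow, Real.sq_sqrt zero_le_two] at h'
  linarith

end

theorem stmt_8_general {n : ℕ} (G : Set (EuclideanSpace ℝ (Fin n)))
    (hGbdd : Bornology.IsBounded G)
    (b : EuclideanSpace ℝ (Fin n) → Fin n → Fin n → ℝ)
    (hbC3 : ∀ j k, ContDiff ℝ 3 (fun x => b x j k))
    (hbsymm : ∀ x j k, b x j k = b x k j)
    (T : ℝ) (hT : 0 < T)
    (ψ : EuclideanSpace ℝ (Fin n) → ℝ) (hψC4 : ContDiff ℝ 4 ψ)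
    (μ₀ : ℝ) (hμ₀ : 0 < μ₀) (hB1 : CondBi8 b ψ μ₀ (closure G))
    (c₀ c₁ : ℝ) (hc₀ : 0 < c₀) (hc₁ : 0 < c₁)
    (hR : ∀ x ∈ closure G,
      sSup (ψ '' closure G) ≤
        (1/4) * ∑ j, ∑ k, b x j k * partialDeriv8 ψ j x * partialDeriv8 ψ k x)
    (hc₁T : c₁ < Real.sqrt (sSup (ψ '' closure G)) / (Real.sqrt 2 * T)) :
    ∃ C > (0:ℝ), ∃ lam₁ > (0:ℝ), ∀ lam : ℝ, lam₁ ≤ lam →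
      ∀ t ∈ Set.Icc (0:ℝ) T, ∀ x ∈ closure G,
        C * lam ^ 3 ≤ BB8 b ψ lam c₀ c₁ t x := by
  set M := sSup (ψ '' closure G)
  have hM : 2 * c₁ ^ 2 * T ^ 2 < M := two_mul_sq_mul_sq_lt_of_lt_sqrt_div hc₁.le hT hc₁T
  have hMpos : 0 < M := lt_of_le_of_lt (by positivity) hM
  have hb₁ : ∀ j k, ContDiff ℝ 1 fun y => b y j k := fun j k => (hbC3 j k).of_le (by norm_num)
  have hψ₂ : ContDiff ℝ 2 ψ := hψC4.of_le (by norm_num)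
  obtain ⟨KD, hKD⟩ := hGbdd.isCompact_closure.exists_bound_of_continuousOn
    (contDiff_divBGrad (m := 0) hb₁ (contDiff_divBGrad hbC3 hψC4)).continuous.continuousOn
  obtain ⟨lam₁, hlam₁, hcubic⟩ := exists_forall_cubic_le (K := max ((4 * c₁ + c₀) ^ 2) (KD / 2))
    (by positivity : 0 < 2 * M * (2 * μ₀ + c₀))
  refine ⟨M * (2 * μ₀ + c₀), by positivity, lam₁, hlam₁, fun lam hlam t ht x hx => ?_⟩
  have hQ : 4 * M ≤ bGradPair b ψ ψ x := by
    have := hR x hx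
    rw [bGradPair]
    linarith
  have hlead := le_leadingCoeff hμ₀ hc₀ hc₁ hQ (hB1.mul_bGradPair_le hb₁ hψ₂ hbsymm hx)
    (pow_le_pow_left₀ ht.1 ht.2 2) hM.le
  have hD : divBGrad b (divBGrad b ψ) x / 2 ≤ max ((4 * c₁ + c₀) ^ 2) (KD / 2) :=
    le_max_of_le_right (by linarith [(Real.le_norm_self _).trans (hKD x hx)])
  calc M * (2 * μ₀ + c₀) * lam ^ 3 = 2 * M * (2 * μ₀ + c₀) / 2 * lam ^ 3 := by ring
    _ ≤ _ := hcubic lam hlam _ _ _ hlead (le_max_left _ _) hD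
    _ = BB8 b ψ lam c₀ c₁ t x := by rw [BB8_eq hbC3 hψC4]; ring

/-- under Condition (B)(i) and the strengthened Condition
(`(1/4)Σ b^{jk}ψ_{x_j}ψ_{x_k} ≥ R₁² := max_{closure G} ψ`, `c₁ < R₁/(√2 T)`,
`μ₀ − 4c₁ − c₀ > 0`), there are `C > 0` and `λ₁ > 0` such that `ℬ ≥ Cλ³` on
`[0,T] × closure G` for all `λ ≥ λ₁`. -/
theorem stmt_8 {n : ℕ} (G : Set (EuclideanSpace ℝ (Fin n)))
    (hGopen : IsOpen G) (hGconn : IsConnected G) (hGbdd : Bornology.IsBounded G)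
    (b : EuclideanSpace ℝ (Fin n) → Fin n → Fin n → ℝ)
    (hbC3 : ∀ j k, ContDiff ℝ 3 (fun x => b x j k))
    (hbsymm : ∀ x j k, b x j k = b x k j)
    (T : ℝ) (hT : 0 < T)
    (ψ : EuclideanSpace ℝ (Fin n) → ℝ) (hψC4 : ContDiff ℝ 4 ψ)
    (hψpos : ∀ x ∈ closure G, 0 < ψ x)
    (μ₀ : ℝ) (hμ₀ : 0 < μ₀) (hB1 : CondBi8 b ψ μ₀ (closure G))
    (c₀ c₁ : ℝ) (hc₀ : 0 < c₀) (hc₁ : 0 < c₁)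
    (hR : ∀ x ∈ closure G,
      sSup (ψ '' closure G) ≤
        (1/4) * ∑ j, ∑ k, b x j k * partialDeriv8 ψ j x * partialDeriv8 ψ k x)
    (hc₁T : c₁ < Real.sqrt (sSup (ψ '' closure G)) / (Real.sqrt 2 * T))
    (hμc : 0 < μ₀ - 4 * c₁ - c₀) :
    ∃ C > (0:ℝ), ∃ lam₁ > (0:ℝ), ∀ lam : ℝ, lam₁ ≤ lam →
      ∀ t ∈ Set.Icc (0:ℝ) T, ∀ x ∈ closure G,
        C * lam ^ 3 ≤ BB8 b ψ lam c₀ c₁ t x :=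
  stmt_8_general G hGbdd b hbC3 hbsymm T hT ψ hψC4 μ₀ hμ₀ hB1 c₀ c₁ hc₀ hc₁ hR hc₁T
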